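/- arXiv:1512.06439 — 2 statements merged into one kernel-verified Lean document; each statement's English description precedes it below -/
import Mathlib

section
/- Let k ≥ 1 be an integer and N ≥ 4^{10(k+1)} a real number. Let a_0, a_1, …, a_Q be points of the circle ℝ/Nℤ (with its arc-length metric d) such that for all indices 0 ≤ r < r' ≤ Q with r' − r ≤ N/16 one has (r' − r) ≤ d(a_r, a_{r'}) ≤ 4^k·(r' − r). Set b_r = a_{r·4^k}. Then the points b_r are placed on the circle in their natural cyclic order: there is an orientation of the circle such that for every r with (r+2)·4^k + 4^{8k} ≤ Q, the point b_{r+1} lies on the (positively oriented) arc from b_r to b_{r+2}; in particular, for no r do the points occur in the cyclic order b_r, b_{r+2}, b_{r+1}. -/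
/-!
Lift the differences `a i - a m` to representatives in `[-N/2, N/2)`. On a window of `W` indices
all points stay within `L * W ≤ N / 4` of `a m`, so the lifts form a real sequence `y` with
`j - i ≤ |y j - y i| ≤ L * (j - i)`. Such a sequence cannot turn back: once it is `L` below
`y t`, its steps of length at most `L` can never bring it within `L` of `y t` again, while it must
stay at distance at least the elapsed time. Hence the blocks `b r → b (r+1)` and
`b (r+1) → b (r+2)` of `L = 4^k` steps move in the same direction, by induction all blocks move
in the direction of the first one, and with that orientation `b (r+1)` and `b (r+2)` sit at
positive displacements `d₁ < d₁ + d₂ < N` from `b r`.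
-/

def BilipschitzOn {X : Type*} [PseudoMetricSpace X] (x : ℕ → X) (L : ℝ) (s t : ℕ) : Prop :=
  ∀ i j, s ≤ i → i < j → j ≤ t →
    (j : ℝ) - i ≤ dist (x i) (x j) ∧ dist (x i) (x j) ≤ L * ((j : ℝ) - i)

namespace BilipschitzOn

theorem mono {X : Type*} [PseudoMetricSpace X] {x : ℕ → X} {L : ℝ} {s t s' t' : ℕ}
    (h : BilipschitzOn x L s t) (hs : s ≤ s') (ht : t' ≤ t) : BilipschitzOn x L s' t' :=
  fun i j hi hij hj => h i j (hs.trans hi) hij (hj.trans ht)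

theorem neg {E : Type*} [SeminormedAddCommGroup E] {x : ℕ → E} {L : ℝ} {s t : ℕ}
    (h : BilipschitzOn x L s t) : BilipschitzOn (fun i => -x i) L s t := by
  intro i j hi hij hj
  simpa only [dist_neg_neg] using h i j hi hij hj

variable {y : ℕ → ℝ} {L t M : ℕ}

theorem apply_le_sub_of_apply_le_sub (hy : BilipschitzOn y L t M) {u v : ℕ} (htu : t + L ≤ u)
    (huv : u ≤ v) (hvM : v ≤ M) (hu : y u ≤ y t - L) : y v ≤ y t - L := by
  induction v, huv using Nat.le_induction with
  | base => exact hu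
  | succ v huv ih =>
    have hv := ih (by omega)
    have hstep := (hy v (v + 1) (by omega) (by omega) hvM).2
    have hsep := (hy t (v + 1) le_rfl (by omega) hvM).1
    have htv : (t : ℝ) + L ≤ v := by exact_mod_cast htu.trans huv
    rw [Real.dist_eq] at hstep hsep
    push_cast at hstep hsep
    by_contra! h
    have hclose : |y t - y (v + 1)| < L := by
      rw [abs_sub_lt_iff]; constructor <;> linarith [(abs_le.mp hstep).1]
    linarith

theorem add_le_apply_of_add_le_apply (hy : BilipschitzOn y L t M) {u v : ℕ} (htu : t + L ≤ u)
    (huv : u ≤ v) (hvM : v ≤ M) (hu : y t + L ≤ y u) : y t + L ≤ y v := by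
  have := hy.neg.apply_le_sub_of_apply_le_sub htu huv hvM (by linarith)
  linarith

theorem step_pos_of_step_pos (hy : BilipschitzOn y L t M) (hM : t + L + L + L ^ 2 ≤ M)
    (h : 0 < y (t + L) - y t) : 0 < y (t + L + L) - y (t + L) := by
  have hL : 0 < L := Nat.pos_of_ne_zero fun hL => by simp [hL] at h
  obtain ⟨hfirst, hfirst'⟩ : (L : ℝ) ≤ y (t + L) - y t ∧ y (t + L) - y t ≤ L * L := by
    have := hy t (t + L) le_rfl (by omega) (by omega)
    rwa [Real.dist_eq, abs_sub_comm, abs_of_pos h, Nat.cast_add, add_sub_cancel_left] at this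
  have hup : ∀ v, t + L ≤ v → v ≤ M → y t + L ≤ y v := fun v hv hvM =>
    hy.add_le_apply_of_add_le_apply le_rfl hv hvM (by linarith)
  by_contra! hback
  have hdown : y (t + L + L) ≤ y (t + L) - L := by
    have := (hy (t + L) (t + L + L) (by omega) (by omega) (by omega)).1
    rw [Real.dist_eq, abs_of_nonneg (by linarith)] at this
    push_cast at this
    linarith
  have hM' : y M ≤ y (t + L) - L :=
    (hy.mono (by omega) le_rfl).apply_le_sub_of_apply_le_sub le_rfl (by omega) le_rfl hdown
  have hsep := (hy (t + L + L) M (by omega) (by nlinarith) le_rfl).1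
  -- both `y (t + L + L)` and `y M` are trapped in `[y t + L, y (t + L) - L]`
  have hclose : |y (t + L + L) - y M| ≤ L * L - 2 * L := abs_sub_le_iff.mpr
    ⟨by linarith [hup M (by omega) le_rfl], by linarith [hup (t + L + L) (by omega) (by omega)]⟩
  have hMcast : (t : ℝ) + L + L + L ^ 2 ≤ M := by exact_mod_cast hM
  have hLpos : (0 : ℝ) < L := by exact_mod_cast hL
  rw [Real.dist_eq] at hsep
  push_cast at hsep
  nlinarith

theorem step_pos_iff (hy : BilipschitzOn y L t M) (hL : 0 < L) (hM : t + L + L + L ^ 2 ≤ M) :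
    0 < y (t + L) - y t ↔ 0 < y (t + L + L) - y (t + L) := by
  refine ⟨hy.step_pos_of_step_pos hM, fun h => ?_⟩
  by_contra! hneg
  have hfirst := (hy t (t + L) le_rfl (by omega) (by omega)).1
  rw [Real.dist_eq, abs_sub_comm, Nat.cast_add, add_sub_cancel_left] at hfirst
  have hLpos : (0 : ℝ) < L := by exact_mod_cast hL
  have hne : y (t + L) - y t ≠ 0 := fun h0 => by
    rw [h0, abs_zero] at hfirst
    linarith
  have := hy.neg.step_pos_of_step_pos hM (by linarith [lt_of_le_of_ne hneg hne])
  linarith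

end BilipschitzOn

theorem mul_self_lt_half_of_le {N : ℝ} {L W : ℕ} (hL : 0 < L) (hW : 2 * L + L ^ 2 ≤ W)
    (hN : 4 * (L : ℝ) * W ≤ N) : (L : ℝ) * L < N / 2 := by
  have : (2 * L + L ^ 2 : ℝ) ≤ W := by exact_mod_cast hW
  have : (0 : ℝ) < L := by exact_mod_cast hL
  nlinarith

namespace AddCircle

variable {N : ℝ} [Fact (0 < N)]

noncomputable def centeredLift (x : AddCircle N) : ℝ :=
  equivIco N (-(N / 2)) x

theorem coe_centeredLift (x : AddCircle N) : (centeredLift x : AddCircle N) = x :=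
  coe_equivIco

theorem centeredLift_mem_Ico (x : AddCircle N) : centeredLift x ∈ Set.Ico (-(N / 2)) (N / 2) := by
  obtain ⟨hlo, hhi⟩ := (equivIco N (-(N / 2)) x).2
  exact ⟨hlo, by unfold centeredLift; linarith⟩

theorem abs_centeredLift_le (x : AddCircle N) : |centeredLift x| ≤ N / 2 :=
  abs_le.mpr ⟨(centeredLift_mem_Ico x).1, (centeredLift_mem_Ico x).2.le⟩

theorem centeredLift_coe {u : ℝ} (hu : |u| < N / 2) : centeredLift (u : AddCircle N) = u :=
  equivIco_coe_of_mem ⟨by linarith [neg_abs_le u], by linarith [le_abs_self u]⟩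

theorem norm_coe_of_abs_le {u : ℝ} (hu : |u| ≤ N / 2) : ‖(u : AddCircle N)‖ = |u| :=
  (norm_coe_eq_abs_iff (p := N) (Fact.out : 0 < N).ne').mpr
    (by rwa [abs_of_pos (Fact.out : 0 < N)])

theorem norm_eq_abs_centeredLift (x : AddCircle N) : ‖x‖ = |centeredLift x| := by
  conv_lhs => rw [← coe_centeredLift x]
  exact norm_coe_of_abs_le (abs_centeredLift_le x)

theorem centeredLift_neg {x : AddCircle N} (hx : |centeredLift x| < N / 2) :
    centeredLift (-x) = -centeredLift x := by
  conv_lhs => rw [← coe_centeredLift x, ← coe_neg]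
  exact centeredLift_coe (by rwa [abs_neg])

theorem centeredLift_sub {x y : AddCircle N} (h : |centeredLift x - centeredLift y| < N / 2) :
    centeredLift (x - y) = centeredLift x - centeredLift y := by
  conv_lhs => rw [← coe_centeredLift x, ← coe_centeredLift y, ← coe_sub]
  exact centeredLift_coe h

theorem centeredLift_zero : centeredLift (0 : AddCircle N) = 0 := by
  simpa using centeredLift_sub (x := 0) (y := 0) (by simpa using (Fact.out : 0 < N))

variable {a : ℕ → AddCircle N} {L : ℕ}

theorem _root_.BilipschitzOn.abs_centeredLift_sub {s t i j : ℕ} (ha : BilipschitzOn a L s t)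
    (hi : s ≤ i) (hij : i < j) (hj : j ≤ t) :
    (j : ℝ) - i ≤ |centeredLift (a j - a i)| ∧ |centeredLift (a j - a i)| ≤ L * ((j : ℝ) - i) := by
  rw [← norm_eq_abs_centeredLift, ← dist_eq_norm, dist_comm]
  exact ha i j hi hij hj

theorem bilipschitzOn_centeredLift_sub {m W : ℕ} (ha : BilipschitzOn a L m (m + W))
    (hN : 4 * (L : ℝ) * W ≤ N) :
    BilipschitzOn (fun i => centeredLift (a i - a m)) L m (m + W) := by
  have hnear : ∀ i, m ≤ i → i ≤ m + W → |centeredLift (a i - a m)| ≤ L * W := by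
    intro i hi hiW
    rcases hi.eq_or_lt with rfl | hlt
    · rw [sub_self, centeredLift_zero, abs_zero]
      positivity
    · have hiW' : (i : ℝ) - m ≤ W := by
        rw [sub_le_iff_le_add']; exact_mod_cast hiW
      exact (ha.abs_centeredLift_sub le_rfl hlt hiW).2.trans (by gcongr)
  intro i j hi hij hj
  have hdist : dist (centeredLift (a i - a m)) (centeredLift (a j - a m)) = dist (a i) (a j) := by
    have hsmall : |centeredLift (a i - a m) - centeredLift (a j - a m)| ≤ N / 2 := by
      linarith [abs_sub (centeredLift (a i - a m)) (centeredLift (a j - a m)),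
        hnear i hi (by omega), hnear j (by omega) hj]
    rw [Real.dist_eq, dist_eq_norm, ← norm_coe_of_abs_le hsmall, coe_sub, coe_centeredLift,
      coe_centeredLift, sub_sub_sub_cancel_right]
  rw [hdist]
  exact ha i j hi hij hj

theorem centeredLift_step_pos_iff {m W : ℕ} (hL : 0 < L) (hW : 2 * L + L ^ 2 ≤ W)
    (hN : 4 * (L : ℝ) * W ≤ N) (ha : BilipschitzOn a L m (m + W)) :
    0 < centeredLift (a (m + L) - a m) ↔ 0 < centeredLift (a (m + L + L) - a (m + L)) := by
  have hy := bilipschitzOn_centeredLift_sub ha hN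
  have key := hy.step_pos_iff hL (by omega)
  beta_reduce at key
  have hLW := mul_self_lt_half_of_le hL hW hN
  have hstep : |centeredLift (a (m + L + L) - a m) - centeredLift (a (m + L) - a m)| < N / 2 := by
    have := (hy (m + L) (m + L + L) (by omega) (by omega) (by omega)).2
    rw [Real.dist_eq, abs_sub_comm, Nat.cast_add (m + L), add_sub_cancel_left] at this
    linarith
  rwa [sub_self, centeredLift_zero, sub_zero, ← centeredLift_sub hstep,
    sub_sub_sub_cancel_right] at key

theorem centeredLift_step_pos {W Q : ℕ} (hL : 0 < L) (hW : 2 * L + L ^ 2 ≤ W)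
    (hN : 4 * (L : ℝ) * W ≤ N) (ha : ∀ m, m + W ≤ Q → BilipschitzOn a L m (m + W))
    (h0 : 0 < centeredLift (a L - a 0)) (r : ℕ) (hr : r * L + W ≤ Q) :
    0 < centeredLift (a (r * L + L) - a (r * L)) := by
  induction r with
  | zero => simpa using h0
  | succ r ih =>
    rw [add_one_mul] at hr ⊢
    exact (centeredLift_step_pos_iff hL hW hN (ha _ (by omega))).mp (ih (by omega))

theorem equivIco_sub_le_of_centeredLift_pos {W Q : ℕ} (hL : 0 < L) (hW : 2 * L + L ^ 2 ≤ W)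
    (hN : 4 * (L : ℝ) * W ≤ N) (ha : ∀ m, m + W ≤ Q → BilipschitzOn a L m (m + W))
    (h0 : 0 < centeredLift (a L - a 0)) (r : ℕ) (hr : r * L + W ≤ Q) :
    (equivIco N 0 (a ((r + 1) * L) - a (r * L)) : ℝ) ≤
      equivIco N 0 (a ((r + 2) * L) - a (r * L)) := by
  have hd₁ := centeredLift_step_pos hL hW hN ha h0 r hr
  have hd₂ := (centeredLift_step_pos_iff hL hW hN (ha _ hr)).mp hd₁
  have hd₁' := ((ha _ hr).abs_centeredLift_sub le_rfl (j := r * L + L) (by omega) (by omega)).2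
  have hd₂' := ((ha _ hr).abs_centeredLift_sub (i := r * L + L) (j := r * L + L + L)
    (by omega) (by omega) (by omega)).2
  rw [Nat.cast_add, add_sub_cancel_left] at hd₁' hd₂'
  have hLN := mul_self_lt_half_of_le hL hW hN
  have hsum : a (r * L + L + L) - a (r * L) = ((centeredLift (a (r * L + L) - a (r * L)) +
      centeredLift (a (r * L + L + L) - a (r * L + L)) : ℝ) : AddCircle N) := by
    rw [coe_add, coe_centeredLift, coe_centeredLift]
    abel
  rw [show (r + 1) * L = r * L + L by ring, show (r + 2) * L = r * L + L + L by ring, hsum]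
  conv_lhs => rw [← coe_centeredLift (a (r * L + L) - a (r * L))]
  rw [equivIco_coe_of_mem, equivIco_coe_of_mem]
  · linarith
  all_goals
    rw [zero_add]
    constructor <;> linarith [le_abs_self (centeredLift (a (r * L + L) - a (r * L))),
      le_abs_self (centeredLift (a (r * L + L + L) - a (r * L + L)))]

theorem exists_orientation_equivIco_sub_le {W Q : ℕ} (hL : 0 < L) (hW : 2 * L + L ^ 2 ≤ W)
    (hN : 4 * (L : ℝ) * W ≤ N) (ha : ∀ m, m + W ≤ Q → BilipschitzOn a L m (m + W)) :
    ∃ ε : Bool, ∀ r, r * L + W ≤ Q →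
      (equivIco N 0 (cond ε (a ((r + 1) * L)) (-a ((r + 1) * L)) - cond ε (a (r * L)) (-a (r * L)))
        : ℝ) ≤
      equivIco N 0 (cond ε (a ((r + 2) * L)) (-a ((r + 2) * L)) - cond ε (a (r * L)) (-a (r * L)))
      := by
  rcases lt_or_ge Q W with hQ | hQ
  · exact ⟨true, fun r hr => by omega⟩
  by_cases h0 : 0 < centeredLift (a L - a 0)
  · exact ⟨true, equivIco_sub_le_of_centeredLift_pos hL hW hN ha h0⟩
  refine ⟨false, equivIco_sub_le_of_centeredLift_pos (a := fun i => -a i) hL hW hN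
    (fun m hm => (ha m hm).neg) ?_⟩
  obtain ⟨hlow, hup⟩ := (ha 0 (by omega)).abs_centeredLift_sub le_rfl hL (by omega)
  rw [Nat.cast_zero, sub_zero] at hlow hup
  have hLN := mul_self_lt_half_of_le hL hW hN
  show 0 < centeredLift (-a L - -a 0)
  rw [neg_sub_neg, ← neg_sub, centeredLift_neg (by linarith)]
  have : (0 : ℝ) < L := by exact_mod_cast hL
  linarith [abs_of_nonpos (not_lt.mp h0)]

end AddCircle

theorem four_pow_window_le {k : ℕ} {N : ℝ} (hN : (4 : ℝ) ^ (10 * (k + 1)) ≤ N) :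
    16 * (2 * (4 : ℝ) ^ k + 4 ^ (8 * k)) ≤ N ∧ 4 * (4 : ℝ) ^ k * (2 * 4 ^ k + 4 ^ (8 * k)) ≤ N := by
  have hx : 1 ≤ (4 : ℝ) ^ k := one_le_pow₀ (by norm_num)
  rw [show 10 * (k + 1) = k * 10 + 10 by ring, pow_add, pow_mul] at hN
  rw [mul_comm 8 k, pow_mul]
  have h1 := pow_le_pow_right₀ hx (show 1 ≤ 10 by norm_num)
  have h2 := pow_le_pow_right₀ hx (show 2 ≤ 10 by norm_num)
  have h8 := pow_le_pow_right₀ hx (show 8 ≤ 10 by norm_num)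
  have h9 := pow_le_pow_right₀ hx (show 9 ≤ 10 by norm_num)
  constructor <;> nlinarith

theorem equally_spaced_points_in_cyclic_order_general
    (k : ℕ) (N : ℝ) [Fact (0 < N)] (hN : (4 : ℝ) ^ (10 * (k + 1)) ≤ N)
    (Q : ℕ) (a : ℕ → AddCircle N)
    (ha : ∀ r r' : ℕ, r < r' → r' ≤ Q → ((r' - r : ℕ) : ℝ) ≤ N / 16 →
      ((r' - r : ℕ) : ℝ) ≤ dist (a r) (a r') ∧
      dist (a r) (a r') ≤ 4 ^ k * ((r' - r : ℕ) : ℝ)) :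
    ∃ ε : Bool,
      ∀ r : ℕ, (r + 2) * 4 ^ k + 4 ^ (8 * k) ≤ Q →
        ((AddCircle.equivIco N 0
            ((cond ε (a ((r + 1) * 4 ^ k)) (-(a ((r + 1) * 4 ^ k)))) -
             (cond ε (a (r * 4 ^ k)) (-(a (r * 4 ^ k)))))) : ℝ) ≤
        ((AddCircle.equivIco N 0
            ((cond ε (a ((r + 2) * 4 ^ k)) (-(a ((r + 2) * 4 ^ k)))) -
             (cond ε (a (r * 4 ^ k)) (-(a (r * 4 ^ k)))))) : ℝ) := by
  obtain ⟨hWN, hLWN⟩ := four_pow_window_le hN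
  have hloc : ∀ m, m + (2 * 4 ^ k + 4 ^ (8 * k)) ≤ Q →
      BilipschitzOn a (4 ^ k : ℕ) m (m + (2 * 4 ^ k + 4 ^ (8 * k))) := by
    intro m hm i j hi hij hj
    have hgap : ((j - i : ℕ) : ℝ) ≤ N / 16 := by
      have : ((j - i : ℕ) : ℝ) ≤ (2 * 4 ^ k + 4 ^ (8 * k) : ℕ) := by exact_mod_cast (by omega)
      push_cast at this
      linarith
    simpa [Nat.cast_sub hij.le] using ha i j hij (by omega) hgap
  have hW : 2 * 4 ^ k + (4 ^ k) ^ 2 ≤ 2 * 4 ^ k + 4 ^ (8 * k) := by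
    rw [mul_comm 8 k, pow_mul]
    exact Nat.add_le_add_left (Nat.pow_le_pow_right (by positivity) (by norm_num)) _
  obtain ⟨ε, hε⟩ := AddCircle.exists_orientation_equivIco_sub_le (by positivity) hW
    (by push_cast; exact hLWN) hloc
  exact ⟨ε, fun r hr => hε r (by rw [add_mul] at hr; omega)⟩

/-- Let `k ≥ 1` and `N ≥ 4^{10(k+1)}`.  Let `a_0, …, a_Q` be points of
the circle `ℝ/Nℤ` (with its arc-length metric) such that
`(r' − r) ≤ dist (a_r) (a_{r'}) ≤ 4^k·(r' − r)` whenever `r < r'` and `r' − r ≤ N/16`.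
Set `b r = a (r·4^k)`.  Then the points `b r` are placed on the circle in their natural
cyclic order: there is an orientation of the circle (`ε : Bool`, realized by possibly
negating all points) such that for every `r` with `(r+2)·4^k + 4^{8k} ≤ Q` the point
`b (r+1)` lies on the positively oriented arc from `b r` to `b (r+2)` (measured via the
representative in `[0, N)` of the difference from `b r`). -/
theorem equally_spaced_points_in_cyclic_order
    (k : ℕ) (hk : 1 ≤ k) (N : ℝ) [Fact (0 < N)] (hN : (4 : ℝ) ^ (10 * (k + 1)) ≤ N)
    (Q : ℕ) (a : ℕ → AddCircle N)
    (ha : ∀ r r' : ℕ, r < r' → r' ≤ Q → ((r' - r : ℕ) : ℝ) ≤ N / 16 →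
      ((r' - r : ℕ) : ℝ) ≤ dist (a r) (a r') ∧
      dist (a r) (a r') ≤ 4 ^ k * ((r' - r : ℕ) : ℝ)) :
    ∃ ε : Bool,
      ∀ r : ℕ, (r + 2) * 4 ^ k + 4 ^ (8 * k) ≤ Q →
        ((AddCircle.equivIco N 0
            ((cond ε (a ((r + 1) * 4 ^ k)) (-(a ((r + 1) * 4 ^ k)))) -
             (cond ε (a (r * 4 ^ k)) (-(a (r * 4 ^ k)))))) : ℝ) ≤
        ((AddCircle.equivIco N 0
            ((cond ε (a ((r + 2) * 4 ^ k)) (-(a ((r + 2) * 4 ^ k)))) -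
             (cond ε (a (r * 4 ^ k)) (-(a (r * 4 ^ k)))))) : ℝ) :=
  equally_spaced_points_in_cyclic_order_general k N hN Q a ha
end

section
/- Let S be a subdiamond of the unweighted diamond graph D_n of height 2^t with t ≥ 3, and let S_1, S_2, S_3, S_4 be subdiamonds properly contained in S that are pairwise vertex-disjoint and such that none of them contains the top or the bottom of S. Then at least two of S_1, S_2, S_3, S_4 have diameter at most diam(S)/8 (equivalently, height at most 2^{t−3}). -/
/-- A graph given by a set of oriented edges. -/
structure EGraph where
  V : Type
  E : Type
  src : E → V
  tgt : E → V

/-- The diamond graphs `D_n`: `D_0` is a single edge, and `D_{n+1}` is obtained from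
`D_n` by replacing each edge `uv` by a quadrilateral `u, a, v, b` (two new vertices
per edge, encoded as `(e, false)` and `(e, true)`). -/
def diamond : ℕ → EGraph
  | 0 => { V := Bool, E := Unit, src := fun _ => false, tgt := fun _ => true }
  | n + 1 =>
    let G := diamond n
    { V := G.V ⊕ (G.E × Bool)
      E := G.E × Fin 4
      src := fun p =>
        if p.2.val = 0 then Sum.inl (G.src p.1)
        else if p.2.val = 1 then Sum.inr (p.1, false)
        else if p.2.val = 2 then Sum.inl (G.src p.1)
        else Sum.inr (p.1, true)
      tgt := fun p =>
        if p.2.val = 0 then Sum.inr (p.1, false)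
        else if p.2.val = 1 then Sum.inl (G.tgt p.1)
        else if p.2.val = 2 then Sum.inr (p.1, true)
        else Sum.inl (G.tgt p.1) }

/-- The Laakso graphs `L_n`: `L_0` is a single edge, and `L_{n+1}` is obtained from `L_n`
by replacing each edge `uv` by a copy of the pattern graph `L_1`.  In the pattern with
endpoints `u, v` and internal vertices `a = 0, b = 1, c = 2, d = 3` (encoded as
`(e, 0), …, (e, 3)`), the six edges are `u-a, a-b, a-c, b-d, c-d, d-v`. -/
def laakso : ℕ → EGraph
  | 0 => { V := Bool, E := Unit, src := fun _ => false, tgt := fun _ => true }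
  | n + 1 =>
    let G := laakso n
    { V := G.V ⊕ (G.E × Fin 4)
      E := G.E × Fin 6
      src := fun p =>
        if p.2.val = 0 then Sum.inl (G.src p.1)
        else if p.2.val = 1 then Sum.inr (p.1, 0)
        else if p.2.val = 2 then Sum.inr (p.1, 0)
        else if p.2.val = 3 then Sum.inr (p.1, 1)
        else if p.2.val = 4 then Sum.inr (p.1, 2)
        else Sum.inr (p.1, 3)
      tgt := fun p =>
        if p.2.val = 0 then Sum.inr (p.1, 0)
        else if p.2.val = 1 then Sum.inr (p.1, 1)
        else if p.2.val = 2 then Sum.inr (p.1, 2)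
        else if p.2.val = 3 then Sum.inr (p.1, 3)
        else if p.2.val = 4 then Sum.inr (p.1, 3)
        else Sum.inl (G.tgt p.1) }

/-- The simple graph underlying an `EGraph`. -/
def EGraph.toSimpleGraph (G : EGraph) : SimpleGraph G.V where
  Adj u v := u ≠ v ∧ ∃ e, (G.src e = u ∧ G.tgt e = v) ∨ (G.src e = v ∧ G.tgt e = u)
  symm := ⟨fun _ _ h => ⟨Ne.symm h.1, h.2.elim fun e he => ⟨e, he.symm⟩⟩⟩
  loopless := ⟨fun _ h => h.1 rfl⟩

/-- The unweighted diamond graph `D_n`; its shortest path metric is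
`(DiamondGraph n).dist`. -/
abbrev DiamondGraph (n : ℕ) : SimpleGraph (diamond n).V := (diamond n).toSimpleGraph

/-- The unweighted Laakso graph `L_n`; its shortest path metric is
`(LaaksoGraph n).dist`. -/
abbrev LaaksoGraph (n : ℕ) : SimpleGraph (laakso n).V := (laakso n).toSimpleGraph

/-- The set of edges of `D_{k+j}` of the subdiamond that evolved from the edge `e`
of `D_k`. -/
def subdiaEdges : (k j : ℕ) → (diamond k).E → Set ((diamond (k + j)).E)
  | _, 0, e => {e}
  | k, j + 1, e => {p : (diamond (k + j)).E × Fin 4 | p.1 ∈ subdiaEdges k j e}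

/-- The natural inclusion of the vertices of `D_k` into the vertices of `D_{k+j}`. -/
def inclV : (k j : ℕ) → (diamond k).V → (diamond (k + j)).V
  | _, 0, v => v
  | k, j + 1, v => Sum.inl (inclV k j v)

/-- A subdiamond of `D_n`: the subgraph of `D_n` that evolved from the edge `e` of `D_k`
(for some `k + j = n`); its height is `2^j`. -/
structure Subdia (n : ℕ) where
  k : ℕ
  j : ℕ
  hkj : k + j = n
  e : (diamond k).E

/-- The edge set of a subdiamond of `D_n`. -/
def Subdia.edges {n : ℕ} (S : Subdia n) : Set ((diamond n).E) :=
  cast (congrArg (fun m => Set ((diamond m).E)) S.hkj) (subdiaEdges S.k S.j S.e)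

/-- The vertex set of a subdiamond of `D_n`: the endpoints of its edges. -/
def Subdia.verts {n : ℕ} (S : Subdia n) : Set ((diamond n).V) :=
  {v | ∃ e' ∈ S.edges, (diamond n).src e' = v ∨ (diamond n).tgt e' = v}

/-- The top vertex of a subdiamond of `D_n`. -/
def Subdia.top {n : ℕ} (S : Subdia n) : (diamond n).V :=
  cast (congrArg (fun m => (diamond m).V) S.hkj) (inclV S.k S.j ((diamond S.k).tgt S.e))

/-- The bottom vertex of a subdiamond of `D_n`. -/
def Subdia.bot {n : ℕ} (S : Subdia n) : (diamond n).V :=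
  cast (congrArg (fun m => (diamond m).V) S.hkj) (inclV S.k S.j ((diamond S.k).src S.e))


/-!
A proper subdiamond `T` of `S` of height more than `2^{t-3}` lies one or two subdivision steps
below `S`. One step below, `T` contains the top or the bottom of `S`; two steps below, it contains
the top or the bottom of `S` or one of the two vertices inserted into the edge of `S` at the first
subdivision. The `T i` avoid the top and the bottom of `S` and are pairwise disjoint, so at most
two of them can be large.
-/

def EGraph.Incident (G : EGraph) (e : G.E) (v : G.V) : Prop :=
  G.src e = v ∨ G.tgt e = v

namespace Diamond

def castV {a b : ℕ} (h : a = b) (v : (diamond a).V) : (diamond b).V :=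
  cast (congrArg (fun m => (diamond m).V) h) v

def castE {a b : ℕ} (h : a = b) (f : (diamond a).E) : (diamond b).E :=
  cast (congrArg (fun m => (diamond m).E) h) f

theorem castV_castV {a b c : ℕ} (h₁ : a = b) (h₂ : b = c) (v : (diamond a).V) :
    castV h₂ (castV h₁ v) = castV (h₁.trans h₂) v := by
  subst h₁ h₂; rfl

theorem castE_castE {a b c : ℕ} (h₁ : a = b) (h₂ : b = c) (f : (diamond a).E) :
    castE h₂ (castE h₁ f) = castE (h₁.trans h₂) f := by
  subst h₁ h₂; rfl

theorem castV_inl {a b : ℕ} (h : a + 1 = b + 1) (v : (diamond a).V) :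
    castV h (Sum.inl v : (diamond (a + 1)).V) = Sum.inl (castV (Nat.succ_inj.mp h) v) := by
  obtain rfl := Nat.succ_inj.mp h; rfl

theorem castE_fst {a b : ℕ} (h : a + 1 = b + 1) (f : (diamond (a + 1)).E) :
    (castE h f).1 = castE (Nat.succ_inj.mp h) f.1 := by
  obtain rfl := Nat.succ_inj.mp h; rfl

def ancestor (k : ℕ) : (j : ℕ) → (diamond (k + j)).E → (diamond k).E
  | 0, f => f
  | j + 1, f => ancestor k j f.1

def iterChild (c : Fin 4) (k : ℕ) : (j : ℕ) → (diamond k).E → (diamond (k + j)).E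
  | 0, f => f
  | j + 1, f => (iterChild c k j f, c)

theorem ancestor_iterChild (c : Fin 4) (k : ℕ) :
    ∀ (j : ℕ) (f : (diamond k).E), ancestor k j (iterChild c k j f) = f
  | 0, _ => rfl
  | j + 1, f => ancestor_iterChild c k j f

theorem ancestor_add (a b : ℕ) :
    ∀ (c : ℕ) (h : a + b + c = a + (b + c)) (f : (diamond (a + b + c)).E),
      ancestor a (b + c) (castE h f) = ancestor a b (ancestor (a + b) c f)
  | 0, _, _ => rfl
  | c + 1, h, f => by
    show ancestor a (b + c) (castE h f).1 = _
    rw [castE_fst h f, ancestor_add a b c]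
    rfl

theorem mem_subdiaEdges_iff (k : ℕ) :
    ∀ (j : ℕ) (e : (diamond k).E) (f : (diamond (k + j)).E),
      f ∈ subdiaEdges k j e ↔ ancestor k j f = e
  | 0, _, _ => Iff.rfl
  | j + 1, e, f => mem_subdiaEdges_iff k j e f.1

theorem src_iterChild_zero (k : ℕ) : ∀ (j : ℕ) (e : (diamond k).E),
    (diamond (k + j)).src (iterChild 0 k j e) = inclV k j ((diamond k).src e)
  | 0, _ => rfl
  | j + 1, e => congrArg Sum.inl (src_iterChild_zero k j e)

theorem tgt_iterChild_one (k : ℕ) : ∀ (j : ℕ) (e : (diamond k).E),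
    (diamond (k + j)).tgt (iterChild 1 k j e) = inclV k j ((diamond k).tgt e)
  | 0, _ => rfl
  | j + 1, e => congrArg Sum.inl (tgt_iterChild_one k j e)

theorem castV_inclV_inl (k : ℕ) : ∀ (j : ℕ) (h : k + 1 + j = k + (j + 1)) (v : (diamond k).V),
    castV h (inclV (k + 1) j (Sum.inl v)) = inclV k (j + 1) v
  | 0, _, _ => rfl
  | j + 1, h, v => by
    show castV h (Sum.inl _) = _
    rw [castV_inl, castV_inclV_inl k j]
    rfl

theorem exists_incident_parent_inl {m : ℕ} (p : (diamond (m + 1)).E) :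
    ∃ v, (diamond m).Incident p.1 v ∧ (diamond (m + 1)).Incident p (Sum.inl v) := by
  obtain ⟨f, c⟩ := p
  fin_cases c
  exacts [⟨_, Or.inl rfl, Or.inl rfl⟩, ⟨_, Or.inr rfl, Or.inr rfl⟩,
    ⟨_, Or.inl rfl, Or.inl rfl⟩, ⟨_, Or.inr rfl, Or.inr rfl⟩]

theorem eq_inl_or_eq_inr_of_incident_child {m : ℕ} {f : (diamond m).E} {c : Fin 4}
    {w : (diamond (m + 1)).V}
    (h : (diamond (m + 1)).Incident (f, c) w) :
    (∃ v, (diamond m).Incident f v ∧ w = Sum.inl v) ∨ ∃ b, w = Sum.inr (f, b) := by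
  fin_cases c <;> rcases h with rfl | rfl
  all_goals first
    | exact Or.inl ⟨_, Or.inl rfl, rfl⟩
    | exact Or.inl ⟨_, Or.inr rfl, rfl⟩
    | exact Or.inr ⟨_, rfl⟩

def midVertex (k t : ℕ) (e : (diamond k).E) (b : Bool) : (diamond (k + (t + 1))).V :=
  castV (Nat.add_right_comm k 1 t) (inclV (k + 1) t (Sum.inr (e, b)))

end Diamond

namespace Subdia

open Diamond

variable {n : ℕ}

theorem mem_edges_iff {S : Subdia n} {f : (diamond n).E} :
    f ∈ S.edges ↔ ancestor S.k S.j (castE S.hkj.symm f) = S.e := by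
  obtain ⟨k, j, rfl, e⟩ := S
  exact mem_subdiaEdges_iff k j e f

theorem castV_inclV_mem_verts {T : Subdia n} {v : (diamond T.k).V}
    (hv : (diamond T.k).Incident T.e v) : castV T.hkj (inclV T.k T.j v) ∈ T.verts := by
  obtain ⟨k, j, rfl, e⟩ := T
  rcases hv with rfl | rfl
  · exact ⟨iterChild 0 k j e, mem_edges_iff.2 (ancestor_iterChild 0 k j e),
      Or.inl (src_iterChild_zero k j e)⟩
  · exact ⟨iterChild 1 k j e, mem_edges_iff.2 (ancestor_iterChild 1 k j e),
      Or.inr (tgt_iterChild_one k j e)⟩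

/-- If `T.k < S.k`, then `T` contains two sibling edges, which lie below different edges of
`D_{S.k}` and so cannot both lie in `S`. -/
theorem k_le_of_edges_subset {S T : Subdia n} (h : T.edges ⊆ S.edges) : S.k ≤ T.k := by
  obtain ⟨k, t, rfl, e⟩ := S
  obtain ⟨k', j', h', e'⟩ := T
  by_contra! hlt
  dsimp only at hlt
  obtain ⟨c, rfl⟩ : ∃ c, k = k' + (c + 1) := ⟨k - k' - 1, by omega⟩
  obtain rfl : j' = c + 1 + t := by omega
  have hchild : ∀ i : Fin 4, (iterChild 0 k' c e', i) = e := fun i => by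
    have hT : ancestor k' (c + 1 + t)
        (castE h'.symm (iterChild 0 (k' + (c + 1)) t (iterChild 0 k' c e', i))) = e' := by
      rw [ancestor_add k' (c + 1) t h'.symm]
      exact (congrArg _ (ancestor_iterChild 0 _ t _)).trans (ancestor_iterChild 0 k' c e')
    rw [← ancestor_iterChild 0 (k' + (c + 1)) t (iterChild 0 k' c e', i)]
    exact mem_edges_iff.1 (h (mem_edges_iff.2 hT))
  have h01 := congrArg Prod.snd ((hchild 0).trans (hchild 1).symm)
  simp at h01

theorem exists_depth_of_edges_subset {S T : Subdia n} (h : T.edges ⊆ S.edges) :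
    ∃ d, ∃ hk : S.k + d = T.k, S.j = T.j + d ∧ ancestor S.k d (castE hk.symm T.e) = S.e := by
  obtain ⟨d, hd⟩ := Nat.exists_eq_add_of_le (k_le_of_edges_subset h)
  obtain ⟨k, t, rfl, e⟩ := S
  obtain ⟨k', j', h', e'⟩ := T
  dsimp only at hd ⊢
  subst hd
  obtain rfl : t = d + j' := by omega
  refine ⟨d, rfl, Nat.add_comm d j', ?_⟩
  have hT : ancestor (k + d) j' (castE h'.symm (castE h' (iterChild 0 (k + d) j' e'))) = e' := by
    rw [castE_castE]
    exact ancestor_iterChild 0 (k + d) j' e'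
  have hS := mem_edges_iff.1 (h ((mem_edges_iff (S := ⟨k + d, j', h', e'⟩)).2 hT))
  dsimp only at hS
  rwa [castE_castE, ancestor_add k d j', ancestor_iterChild] at hS

/-- A proper subdiamond of depth `1` or `2` below `S` contains an endpoint of `S` or one of the
two vertices created in the first subdivision of `S`. -/
theorem j_add_three_le_or_midVertex_mem {k t : ℕ} {e : (diamond k).E} {T : Subdia (k + (t + 1))}
    (hsub : T.edges ⊂ (⟨k, t + 1, rfl, e⟩ : Subdia (k + (t + 1))).edges)
    (htop : (⟨k, t + 1, rfl, e⟩ : Subdia (k + (t + 1))).top ∉ T.verts)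
    (hbot : (⟨k, t + 1, rfl, e⟩ : Subdia (k + (t + 1))).bot ∉ T.verts) :
    T.j + 3 ≤ t + 1 ∨ ∃ b, midVertex k t e b ∈ T.verts := by
  have hends : ∀ v, (diamond k).Incident e v → inclV k (t + 1) v ∉ T.verts := by
    rintro v (rfl | rfl)
    exacts [hbot, htop]
  obtain ⟨d, hk, ht, hanc⟩ := exists_depth_of_edges_subset hsub.subset
  obtain ⟨k', j', h', e'⟩ := T
  dsimp only at hk ht hanc ⊢
  subst hk
  rcases lt_or_ge d 3 with hd | hd
  swap
  · left
    omega
  interval_cases d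
  · obtain rfl : j' = t + 1 := ht.symm
    obtain rfl : e' = e := hanc
    exact absurd rfl hsub.ne
  · obtain rfl : j' = t := by omega
    obtain ⟨v, hv, hv'⟩ := exists_incident_parent_inl e'
    obtain rfl : e'.1 = e := hanc
    have hT := castV_inclV_mem_verts (T := ⟨k + 1, j', h', e'⟩) hv'
    dsimp only at hT
    rw [castV_inclV_inl] at hT
    exact absurd hT (hends v hv)
  · obtain rfl : t = j' + 1 := by omega
    obtain ⟨w, hw, hw'⟩ := exists_incident_parent_inl e'
    obtain ⟨⟨f, c⟩, c'⟩ := e'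
    obtain rfl : f = e := hanc
    have hT := castV_inclV_mem_verts (T := ⟨k + 2, j', h', ((f, c), c')⟩) hw'
    dsimp only at hT
    rw [show castV h' (inclV (k + 2) j' (Sum.inl w)) = castV (Nat.add_right_comm k 1 (j' + 1))
        (inclV (k + 1) (j' + 1) w) by
      rw [← castV_inclV_inl (k + 1) j' (by omega), castV_castV]] at hT
    rcases eq_inl_or_eq_inr_of_incident_child hw with ⟨v, hv, rfl⟩ | ⟨b, rfl⟩
    · rw [castV_inclV_inl] at hT
      exact absurd hT (hends v hv)
    · exact Or.inr ⟨b, hT⟩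

end Subdia

open Finset Function in
theorem card_filter_not_le_of_pairwise_disjoint {ι α β : Type*} [Fintype ι] [Fintype β]
    {A : ι → Set α} (hA : Pairwise (Disjoint on A)) {P : ι → Prop} [DecidablePred P]
    (m : β → α) (hm : ∀ i, ¬P i → ∃ b, m b ∈ A i) :
    #{i | ¬P i} ≤ Fintype.card β := by
  choose g hg using hm
  rw [← Fintype.card_subtype]
  refine Fintype.card_le_of_injective (fun i => g i i.2) fun i i' (hgi : g i i.2 = g i' i'.2) =>
    Subtype.ext ?_
  by_contra hne
  exact Set.disjoint_left.1 (hA hne) (hg i i.2) (hgi ▸ hg i' i'.2)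

/-- Let `S` be a subdiamond of `D_n` of height `2^t` with `t ≥ 3`, and
let `S_1, S_2, S_3, S_4` be subdiamonds properly contained in `S`, pairwise vertex
disjoint, none of which contains the top or the bottom of `S`.  Then at least two of them
have height at most `2^{t−3}` (equivalently, diameter at most `diam S / 8`). -/
theorem two_subdiamonds_are_small (n t : ℕ) (ht : 3 ≤ t) (S : Subdia n) (hS : S.j = t)
    (T : Fin 4 → Subdia n)
    (hsub : ∀ i, (T i).edges ⊂ S.edges)
    (hdisj : ∀ i i', i ≠ i' → (T i).verts ∩ (T i').verts = ∅)
    (htop : ∀ i, S.top ∉ (T i).verts)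
    (hbot : ∀ i, S.bot ∉ (T i).verts) :
    ∃ i i' : Fin 4, i ≠ i' ∧ (T i).j + 3 ≤ t ∧ (T i').j + 3 ≤ t := by
  obtain ⟨k, _, rfl, e⟩ := S
  obtain ⟨s, rfl⟩ : ∃ s, t = s + 1 := ⟨t - 1, by omega⟩
  subst hS
  have hlarge := card_filter_not_le_of_pairwise_disjoint (A := fun i => (T i).verts)
    (fun i i' hne => Set.disjoint_iff_inter_eq_empty.2 (hdisj i i' hne))
    (P := fun i => (T i).j + 3 ≤ s + 1) (Diamond.midVertex k s e) fun i hi =>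
      (Subdia.j_add_three_le_or_midVertex_mem (hsub i) (htop i) (hbot i)).resolve_left hi
  have hsmall : 1 < Finset.card {i | (T i).j + 3 ≤ s + 1} := by
    have := Finset.card_filter_add_card_filter_not (s := Finset.univ)
      (p := fun i => (T i).j + 3 ≤ s + 1)
    simp only [Finset.card_univ, Fintype.card_fin, Fintype.card_bool] at this hlarge
    omega
  obtain ⟨i, hi, i', hi', hne⟩ := Finset.one_lt_card.1 hsmall
  exact ⟨i, i', hne, (Finset.mem_filter.1 hi).2, (Finset.mem_filter.1 hi').2⟩
end
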